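/- For every natural number n ≥ 1, we have n^(n+1/2)·exp(−n + 1/(12n+1)) < n!/√(2π) < n^(n+1/2)·exp(−n + 1/(12n)). -/

import Mathlib

open Real Filter Stirling
open scoped Topology

namespace Robbins

noncomputable def t (m : ℕ) : ℝ := (1 / (2 * (m + 1 : ℝ) + 1)) ^ 2

lemma t_pos (m : ℕ) : 0 < t m := by unfold t; positivity

lemma t_lt_one (m : ℕ) : t m < 1 := by
  unfold t
  have hm : (0:ℝ) ≤ (m:ℝ) := Nat.cast_nonneg m
  rw [div_pow, one_pow, div_lt_one (by positivity)]
  nlinarith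

lemma diff_hasSum (m : ℕ) :
    HasSum (fun k : ℕ => (1 : ℝ) / (2 * ↑(k + 1) + 1) * (t m) ^ (k + 1))
      (log (stirlingSeq (m + 1)) - log (stirlingSeq (m + 2))) := by
  have := Stirling.log_stirlingSeq_diff_hasSum m
  convert this using 2 with k
  push_cast
  rfl

lemma upper_hasSum (m : ℕ) :
    HasSum (fun k : ℕ => (1 / 3 : ℝ) * (t m) ^ (k + 1)) (t m / 3 * (1 - t m)⁻¹) := by
  have := (hasSum_geometric_of_lt_one (t_pos m).le (t_lt_one m)).mul_left (t m / 3)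
  convert this using 2 with k
  · rfl
  rw [pow_succ']
  ring

lemma lower_hasSum (m : ℕ) :
    HasSum (fun k : ℕ => (t m / 3) ^ (k + 1)) (t m / 3 * (1 - t m / 3)⁻¹) := by
  have h1 : (0 : ℝ) ≤ t m / 3 := div_nonneg (t_pos m).le (by norm_num)
  have h2 : t m / 3 < 1 := by
    have := t_lt_one m; linarith
  have := (hasSum_geometric_of_lt_one h1 h2).mul_left (t m / 3)
  convert this using 2 with k
  · rfl
  rw [pow_succ']

lemma diff_lt (m : ℕ) :
    log (stirlingSeq (m + 1)) - log (stirlingSeq (m + 2)) <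
      1 / (12 * (m + 1 : ℝ)) - 1 / (12 * (m + 2 : ℝ)) := by
  have hlt : log (stirlingSeq (m + 1)) - log (stirlingSeq (m + 2)) < t m / 3 * (1 - t m)⁻¹ := by
    refine hasSum_lt (i := 1) (fun k => ?_) ?_ (diff_hasSum m) (upper_hasSum m)
    · apply mul_le_mul_of_nonneg_right _ (pow_nonneg (t_pos m).le _)
      rw [div_le_div_iff₀ (by positivity) (by norm_num)]
      push_cast; linarith [Nat.cast_nonneg (α := ℝ) k]
    · apply mul_lt_mul_of_pos_right _ (pow_pos (t_pos m) _)
      norm_num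
  have heq : t m / 3 * (1 - t m)⁻¹ = 1 / (12 * (m + 1 : ℝ)) - 1 / (12 * (m + 2 : ℝ)) := by
    unfold t
    have hm : (0:ℝ) ≤ (m:ℝ) := Nat.cast_nonneg m
    have hs : (2 * (m + 1 : ℝ) + 1) ≠ 0 := by positivity
    have hs2 : ((2 * (m + 1 : ℝ) + 1) ^ 2 - 1) ≠ 0 := by nlinarith
    have h1t : 1 - (1 / (2 * (m + 1 : ℝ) + 1)) ^ 2
        = ((2 * (m + 1 : ℝ) + 1) ^ 2 - 1) / (2 * (m + 1 : ℝ) + 1) ^ 2 := by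
      field_simp
    rw [h1t, inv_div]
    field_simp
    ring
  linarith [heq ▸ hlt]

lemma diff_gt (m : ℕ) :
    1 / (12 * (m + 1 : ℝ) + 1) - 1 / (12 * (m + 2 : ℝ) + 1) <
      log (stirlingSeq (m + 1)) - log (stirlingSeq (m + 2)) := by
  have hgt : t m / 3 * (1 - t m / 3)⁻¹ < log (stirlingSeq (m + 1)) - log (stirlingSeq (m + 2)) := by
    refine hasSum_lt (i := 1) (fun k => ?_) ?_ (lower_hasSum m) (diff_hasSum m)
    · have h3 : (2 * ((k:ℝ) + 1) + 1) ≤ 3 ^ (k + 1) := by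
        have := one_add_mul_le_pow (a := (2:ℝ)) (by norm_num) (k + 1)
        push_cast at this ⊢
        norm_num at this ⊢
        linarith
      have h5 : (0:ℝ) < 2 * ((k:ℝ) + 1) + 1 := by positivity
      calc (t m / 3) ^ (k + 1) = t m ^ (k + 1) / 3 ^ (k + 1) := div_pow _ _ _
        _ ≤ t m ^ (k + 1) / (2 * ((k:ℝ) + 1) + 1) := by
            apply div_le_div_of_nonneg_left (pow_nonneg (t_pos m).le _) h5 h3
        _ = 1 / (2 * ↑(k + 1) + 1) * t m ^ (k + 1) := by push_cast; ring
    · have ht2 := pow_pos (t_pos m) 2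
      push_cast
      rw [div_pow]
      norm_num
      linarith
  have heq : t m / 3 * (1 - t m / 3)⁻¹ = 1 / (12 * (m + 1:ℝ) ^ 2 + 12 * (m + 1:ℝ) + 2) := by
    unfold t
    have hm : (0:ℝ) ≤ (m:ℝ) := Nat.cast_nonneg m
    have hs : (2 * (m + 1 : ℝ) + 1) ≠ 0 := by positivity
    have hs2 : (3 * (2 * (m + 1 : ℝ) + 1) ^ 2 - 1) ≠ 0 := by nlinarith
    have h1t : 1 - (1 / (2 * (m + 1 : ℝ) + 1)) ^ 2 / 3
        = (3 * (2 * (m + 1 : ℝ) + 1) ^ 2 - 1) / (3 * (2 * (m + 1 : ℝ) + 1) ^ 2) := by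
      field_simp
    rw [h1t, inv_div]
    field_simp
    rw [div_eq_one_iff_eq (by nlinarith)]
    ring
  have hineq : 1 / (12 * (m + 1:ℝ) + 1) - 1 / (12 * (m + 2:ℝ) + 1) <
      1 / (12 * (m + 1:ℝ) ^ 2 + 12 * (m + 1:ℝ) + 2) := by
    have hm : (0:ℝ) ≤ (m:ℝ) := Nat.cast_nonneg m
    rw [div_sub_div _ _ (by positivity) (by positivity),
      div_lt_div_iff₀ (by positivity) (by positivity)]
    nlinarith
  linarith [heq ▸ hgt]

lemma tendsto_log_stirling :
    Tendsto (fun m : ℕ => log (stirlingSeq (m + 1))) atTop (𝓝 (log (√π))) := by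
  have hpi : (0:ℝ) < √π := Real.sqrt_pos.mpr Real.pi_pos
  exact ((Real.continuousAt_log hpi.ne').tendsto.comp
    (Stirling.tendsto_stirlingSeq_sqrt_pi.comp (tendsto_add_atTop_nat 1)))

lemma tendsto_aux (c : ℝ) :
    Tendsto (fun m : ℕ => 1 / (12 * (m + 1 : ℝ) + c)) atTop (𝓝 0) := by
  simp_rw [one_div]
  apply Tendsto.inv_tendsto_atTop
  apply tendsto_atTop_add_const_right
  apply Tendsto.const_mul_atTop (by norm_num : (0:ℝ) < 12)
  exact tendsto_atTop_add_const_right _ _ tendsto_natCast_atTop_atTop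

lemma key (m : ℕ) :
    1 / (12 * (m + 1 : ℝ) + 1) < log (stirlingSeq (m + 1)) - log (√π) ∧
      log (stirlingSeq (m + 1)) - log (√π) < 1 / (12 * (m + 1 : ℝ)) := by
  set a : ℕ → ℝ := fun m => log (stirlingSeq (m + 1)) - 1 / (12 * (m + 1 : ℝ)) with ha
  set b : ℕ → ℝ := fun m => log (stirlingSeq (m + 1)) - 1 / (12 * (m + 1 : ℝ) + 1) with hb
  have hamono : StrictMono a := by
    apply strictMono_nat_of_lt_succ
    intro k
    have h := diff_lt k
    simp only [ha]
    push_cast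
    have e : ((k:ℝ) + 1 + 1) = (k:ℝ) + 2 := by ring
    rw [e]
    linarith
  have hbanti : StrictAnti b := by
    apply strictAnti_nat_of_succ_lt
    intro k
    have h := diff_gt k
    simp only [hb]
    push_cast
    have e : ((k:ℝ) + 1 + 1) = (k:ℝ) + 2 := by ring
    rw [e]
    linarith
  have hta : Tendsto a atTop (𝓝 (log (√π))) := by
    have h0 : Tendsto (fun m : ℕ => 1 / (12 * (m + 1 : ℝ))) atTop (𝓝 0) := by
      have := tendsto_aux 0
      simpa using this
    simpa only [sub_zero] using tendsto_log_stirling.sub h0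
  have htb : Tendsto b atTop (𝓝 (log (√π))) := by
    simpa only [sub_zero] using tendsto_log_stirling.sub (tendsto_aux 1)
  constructor
  · have h1 : log (√π) ≤ b (m + 1) := hbanti.antitone.le_of_tendsto htb (m + 1)
    have h2 : b (m + 1) < b m := hbanti (Nat.lt_succ_self m)
    simp only [hb] at h1 h2
    linarith
  · have h1 : a (m + 1) ≤ log (√π) := hamono.monotone.ge_of_tendsto hta (m + 1)
    have h2 : a m < a (m + 1) := hamono (Nat.lt_succ_self m)
    simp only [ha] at h1 h2
    linarith

end Robbins

theorem stmt_1 (n : ℕ) (hn : 1 ≤ n) :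
    (n : ℝ) ^ ((n : ℝ) + 1 / 2) * Real.exp (-(n : ℝ) + 1 / (12 * n + 1)) <
      (Nat.factorial n : ℝ) / Real.sqrt (2 * π) ∧
    (Nat.factorial n : ℝ) / Real.sqrt (2 * π) <
      (n : ℝ) ^ ((n : ℝ) + 1 / 2) * Real.exp (-(n : ℝ) + 1 / (12 * n)) := by
  obtain ⟨m, rfl⟩ : ∃ m, n = m + 1 := ⟨n - 1, (Nat.succ_pred_eq_of_pos hn).symm⟩
  obtain ⟨hkey1, hkey2⟩ := Robbins.key m
  have hx : (0:ℝ) < ((m + 1 : ℕ) : ℝ) := by positivity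
  have hfac : (0:ℝ) < (Nat.factorial (m+1) : ℝ) := by positivity
  have hsqrt : (0:ℝ) < Real.sqrt (2 * π) := Real.sqrt_pos.mpr (by positivity)
  have hstir : Real.log (Stirling.stirlingSeq (m + 1)) =
      Real.log (Nat.factorial (m+1)) - 1/2 * (Real.log 2 + Real.log ((m+1:ℕ):ℝ))
        - ((m+1:ℕ):ℝ) * (Real.log ((m+1:ℕ):ℝ) - 1) := by
    rw [Stirling.log_stirlingSeq_formula, Real.log_mul (by norm_num) hx.ne',
      Real.log_div hx.ne' (Real.exp_pos 1).ne', Real.log_exp]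
    try push_cast
    try ring
  have hsp : Real.log (√π) = Real.log π / 2 := Real.log_sqrt Real.pi_pos.le
  have hR : Real.log ((Nat.factorial (m+1) : ℝ) / Real.sqrt (2 * π)) =
      Real.log (Nat.factorial (m+1)) - (Real.log 2 + Real.log π) / 2 := by
    rw [Real.log_div hfac.ne' hsqrt.ne', Real.log_sqrt (by positivity),
      Real.log_mul (by norm_num) Real.pi_pos.ne']
    try ring
  have hLlog : ∀ c : ℝ, Real.log (((m+1:ℕ):ℝ) ^ (((m+1:ℕ):ℝ) + 1/2) * Real.exp (-((m+1:ℕ):ℝ) + c))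
      = (((m+1:ℕ):ℝ) + 1/2) * Real.log ((m+1:ℕ):ℝ) + (-((m+1:ℕ):ℝ) + c) := by
    intro c
    rw [Real.log_mul (by positivity) (Real.exp_pos _).ne', Real.log_rpow hx, Real.log_exp]
  constructor
  · rw [← Real.log_lt_log_iff (by positivity) (by positivity), hLlog, hR]
    rw [hsp] at hkey1
    push_cast at hstir hkey1 ⊢
    linarith
  · rw [← Real.log_lt_log_iff (by positivity) (by positivity), hLlog, hR]
    rw [hsp] at hkey2
    push_cast at hstir hkey2 ⊢
    linarith
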